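/- If Σ is a positive definite q×q matrix solving Σ = (1−γ)(1/n)∑ᵢ u(xᵢᵀΣ⁻¹xᵢ)xᵢxᵢᵀ + γ I_q where 0 < γ ≤ 1, u(s) ≥ 0, and s·u(s) ≤ κ with (1−γ)κ < 1, then γ I_q ≤ Σ ≤ (γ/(1−(1−γ)κ)) I_q in the Loewner order. -/

import Mathlib

open Matrix BigOperators

lemma dot_symm' {q : ℕ} {S : Matrix (Fin q) (Fin q) ℝ} (hS : S.IsHermitian)
    (a b : Fin q → ℝ) : a ⬝ᵥ S *ᵥ b = b ⬝ᵥ S *ᵥ a := by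
  rw [dotProduct_mulVec, dotProduct_comm, ← mulVec_transpose,
    show Sᵀ = S from (congrArg Matrix.transpose hS.eq).symm.trans (by simp)]

lemma cs' {q : ℕ} {S : Matrix (Fin q) (Fin q) ℝ} (hS : S.PosSemidef) (a b : Fin q → ℝ) :
    (a ⬝ᵥ S *ᵥ b) ^ 2 ≤ (a ⬝ᵥ S *ᵥ a) * (b ⬝ᵥ S *ᵥ b) := by
  have hsymm := dot_symm' hS.1 a b
  have key : ∀ t : ℝ, 0 ≤ (b ⬝ᵥ S *ᵥ b) * (t * t) + (2 * (a ⬝ᵥ S *ᵥ b)) * t + (a ⬝ᵥ S *ᵥ a) := by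
    intro t
    have h := hS.dotProduct_mulVec_nonneg (a + t • b)
    simp only [star_trivial, mulVec_add, mulVec_smul, dotProduct_add, dotProduct_smul,
      add_dotProduct, smul_dotProduct, smul_eq_mul] at h
    rw [← hsymm] at h
    nlinarith [h]
  have hd := discrim_le_zero key
  rw [discrim] at hd
  nlinarith

lemma sum_mulVec' {q n : ℕ} (M : Fin n → Matrix (Fin q) (Fin q) ℝ) (v : Fin q → ℝ) :
    (∑ i, M i) *ᵥ v = ∑ i, M i *ᵥ v := by
  ext j
  simp [mulVec, dotProduct, Matrix.sum_apply, Finset.sum_mul]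
  rw [Finset.sum_comm]

lemma dotProduct_sum' {q n : ℕ} (v : Fin q → ℝ) (f : Fin n → Fin q → ℝ) :
    v ⬝ᵥ (∑ i, f i) = ∑ i, v ⬝ᵥ f i := by
  simp [dotProduct, Finset.sum_apply, Finset.mul_sum]
  rw [Finset.sum_comm]

lemma dot_vecMulVec' {q : ℕ} (w v : Fin q → ℝ) :
    v ⬝ᵥ (vecMulVec w w *ᵥ v) = (w ⬝ᵥ v) ^ 2 := by
  have h : vecMulVec w w *ᵥ v = (w ⬝ᵥ v) • w := by
    ext i
    simp [mulVec, vecMulVec_apply, dotProduct, Finset.mul_sum, mul_comm, mul_left_comm]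
  rw [h, dotProduct_smul, smul_eq_mul, pow_two, dotProduct_comm]

/-- If `S > 0` solves `S = (1-γ)(1/n) ∑ᵢ u(xᵢᵀS⁻¹xᵢ) xᵢxᵢᵀ + γ I` with
`0 < γ ≤ 1`, `u ≥ 0` and `s·u(s) ≤ κ` with `(1-γ)κ < 1`, then
`γ I ≤ S ≤ (γ/(1-(1-γ)κ)) I` (Loewner order). -/
theorem stmt1 {q n : ℕ} (hn : 0 < n) (x : Fin n → Fin q → ℝ)
    (u : ℝ → ℝ) (γ κ : ℝ) (hγ0 : 0 < γ) (hγ1 : γ ≤ 1) (hκ : (1 - γ) * κ < 1)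
    (hu : ∀ s : ℝ, 0 ≤ s → 0 ≤ u s)
    (hψ : ∀ s : ℝ, 0 ≤ s → s * u s ≤ κ)
    (S : Matrix (Fin q) (Fin q) ℝ) (hS : S.PosDef)
    (heq : S = ((1 - γ) * (n : ℝ)⁻¹) •
      (∑ i, u ((x i) ⬝ᵥ (S⁻¹ *ᵥ (x i))) • vecMulVec (x i) (x i)) + γ • (1 : Matrix (Fin q) (Fin q) ℝ)) :
    (S - γ • (1 : Matrix (Fin q) (Fin q) ℝ)).PosSemidef ∧
      ((γ / (1 - (1 - γ) * κ)) • (1 : Matrix (Fin q) (Fin q) ℝ) - S).PosSemidef := by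
  have hκ0 : 0 ≤ κ := by have := hψ 0 le_rfl; simpa using this
  have hc : 0 < 1 - (1 - γ) * κ := by linarith
  have hsnn : ∀ i, 0 ≤ x i ⬝ᵥ S⁻¹ *ᵥ x i := fun i => by
    simpa using hS.inv.posSemidef.dotProduct_mulVec_nonneg (x i)
  have hnpos : (0 : ℝ) < (n : ℝ) := by exact_mod_cast hn
  have hSherm : S.IsHermitian := hS.1
  have hherm1 : ∀ c : ℝ, (c • (1 : Matrix (Fin q) (Fin q) ℝ)).IsHermitian := fun c => by
    unfold Matrix.IsHermitian; simp
  -- the quadratic form identity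
  have quad : ∀ v : Fin q → ℝ, v ⬝ᵥ S *ᵥ v =
      ((1 - γ) * (n : ℝ)⁻¹) * (∑ i, u (x i ⬝ᵥ S⁻¹ *ᵥ x i) * (x i ⬝ᵥ v) ^ 2)
        + γ * (v ⬝ᵥ v) := by
    intro v
    conv_lhs => rw [heq]
    rw [add_mulVec, dotProduct_add, smul_mulVec, dotProduct_smul, sum_mulVec',
      dotProduct_sum', smul_mulVec, one_mulVec, dotProduct_smul]
    simp only [smul_eq_mul]
    congr 1
    congr 1
    refine Finset.sum_congr rfl fun i _ => ?_
    rw [smul_mulVec, dotProduct_smul, smul_eq_mul, dot_vecMulVec']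
  have hQnn : ∀ v : Fin q → ℝ, 0 ≤ v ⬝ᵥ S *ᵥ v := fun v => by
    simpa using hS.posSemidef.dotProduct_mulVec_nonneg v
  have hSS : S * S⁻¹ = 1 := mul_nonsing_inv S (isUnit_iff_ne_zero.mpr hS.det_pos.ne')
  constructor
  · refine PosSemidef.of_dotProduct_mulVec_nonneg (hSherm.sub (hherm1 γ)) fun v => ?_
    simp only [star_trivial, sub_mulVec, dotProduct_sub, smul_mulVec, one_mulVec,
      dotProduct_smul, smul_eq_mul]
    rw [quad v]
    have hsum : 0 ≤ ∑ i, u (x i ⬝ᵥ S⁻¹ *ᵥ x i) * (x i ⬝ᵥ v) ^ 2 :=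
      Finset.sum_nonneg fun i _ => mul_nonneg (hu _ (hsnn i)) (sq_nonneg _)
    have hcoef : (0:ℝ) ≤ (1 - γ) * (n : ℝ)⁻¹ :=
      mul_nonneg (by linarith) (by positivity)
    nlinarith [mul_nonneg hcoef hsum]
  · refine PosSemidef.of_dotProduct_mulVec_nonneg ((hherm1 _).sub hSherm) fun v => ?_
    simp only [star_trivial, sub_mulVec, dotProduct_sub, smul_mulVec, one_mulVec,
      dotProduct_smul, smul_eq_mul]
    set Q := v ⬝ᵥ S *ᵥ v with hQdef
    have hterm : ∀ i : Fin n, u (x i ⬝ᵥ S⁻¹ *ᵥ x i) * (x i ⬝ᵥ v) ^ 2 ≤ κ * Q := by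
      intro i
      have ha : S *ᵥ (S⁻¹ *ᵥ x i) = x i := by
        rw [mulVec_mulVec, hSS, one_mulVec]
      have hcs := cs' hS.posSemidef (S⁻¹ *ᵥ x i) v
      rw [ha] at hcs
      have h1 : (S⁻¹ *ᵥ x i) ⬝ᵥ x i = x i ⬝ᵥ S⁻¹ *ᵥ x i := dotProduct_comm _ _
      have h2 : (S⁻¹ *ᵥ x i) ⬝ᵥ S *ᵥ v = x i ⬝ᵥ v := by
        rw [dot_symm' hSherm, ha, dotProduct_comm]
      rw [h1, h2] at hcs
      have hψi := hψ _ (hsnn i)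
      have hui := hu _ (hsnn i)
      nlinarith [hQnn v, hcs, hψi, hui, mul_nonneg hui (hQnn v)]
    have hsum : ∑ i, u (x i ⬝ᵥ S⁻¹ *ᵥ x i) * (x i ⬝ᵥ v) ^ 2 ≤ (n : ℝ) * (κ * Q) := by
      calc ∑ i, u (x i ⬝ᵥ S⁻¹ *ᵥ x i) * (x i ⬝ᵥ v) ^ 2 ≤ ∑ _i : Fin n, κ * Q :=
            Finset.sum_le_sum fun i _ => hterm i
        _ = (n : ℝ) * (κ * Q) := by simp [Finset.sum_const, Finset.card_univ, nsmul_eq_mul]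
    have hcoef : (0:ℝ) ≤ (1 - γ) * (n : ℝ)⁻¹ :=
      mul_nonneg (by linarith) (by positivity)
    have hmain : Q ≤ (1 - γ) * κ * Q + γ * (v ⬝ᵥ v) := by
      have h2 := mul_le_mul_of_nonneg_left hsum hcoef
      have hinv : (1 - γ) * (n : ℝ)⁻¹ * ((n : ℝ) * (κ * Q)) = (1 - γ) * κ * Q := by
        field_simp
      rw [hinv] at h2
      have h3 := quad v
      rw [← hQdef] at h3
      linarith
    have hcQ : (1 - (1 - γ) * κ) * Q ≤ γ * (v ⬝ᵥ v) := by nlinarith [hmain]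
    rw [sub_nonneg, div_mul_eq_mul_div, le_div_iff₀ hc]
    nlinarith [hcQ]
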